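/- If b : ℝ → ℝ is nonnegative, non-increasing on [0,∞), and ∫₀^∞ b(s)² ds < ∞, and 0 < γ < 1, then the double integral ∫₀^∞ ∫₀^s b(s) b(τ) γ^(s-τ) dτ ds is finite; in fact it is bounded above by (1/(-log γ)) ∫₀^∞ b(s)² ds. -/

import Mathlib

open MeasureTheory Filter Set
open scoped Topology

theorem stmt1 (b : ℝ → ℝ) (γ : ℝ) (hb : Continuous b)
    (hnonneg : ∀ t ∈ Set.Ici (0:ℝ), 0 ≤ b t)
    (hmono : AntitoneOn b (Set.Ici 0))
    (hsq : IntegrableOn (fun s => (b s) ^ 2) (Set.Ici 0))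
    (hγ0 : 0 < γ) (hγ1 : γ < 1) :
    IntegrableOn (fun s => ∫ τ in (0:ℝ)..s, b s * b τ * γ ^ (s - τ)) (Set.Ici 0) ∧
    ∫ s in Set.Ici (0:ℝ), ∫ τ in (0:ℝ)..s, b s * b τ * γ ^ (s - τ) ≤
      (1 / (-Real.log γ)) * ∫ s in Set.Ici (0:ℝ), (b s) ^ 2 := by
  set L : ℝ := -Real.log γ with hLdef
  have hlog : Real.log γ < 0 := Real.log_neg hγ0 hγ1
  have hL : 0 < L := neg_pos.mpr hlog
  have hrpow : ∀ x : ℝ, γ ^ x = Real.exp (Real.log γ * x) := fun x =>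
    Real.rpow_def_of_pos hγ0 x
  -- integrability and value of the exponential integral
  have hexp_int : ∀ τ : ℝ, IntegrableOn (fun s => γ ^ (s - τ)) (Ioi τ) := by
    intro τ
    have : (fun s : ℝ => γ ^ (s - τ)) = fun s => Real.exp (L * τ) * Real.exp (-L * s) := by
      funext s; rw [hrpow, ← Real.exp_add, hLdef]; ring_nf
    rw [this]
    exact (exp_neg_integrableOn_Ioi τ hL).const_mul _
  have hexp_val : ∀ τ : ℝ, ∫ s in Ioi τ, γ ^ (s - τ) = 1 / L := by
    intro τ
    have hderiv : ∀ x ∈ Ici τ, HasDerivAt (fun s => -(1 / L) * γ ^ (s - τ)) (γ ^ (x - τ)) x := by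
      intro x _
      have h1 : HasDerivAt (fun s : ℝ => Real.log γ * (s - τ)) (Real.log γ * 1) x :=
        ((hasDerivAt_id x).sub_const τ).const_mul _
      have h2 := (h1.exp).const_mul (-(1 / L))
      have hfun : (fun s => -(1 / L) * Real.exp (Real.log γ * (s - τ)))
          = fun s => -(1 / L) * γ ^ (s - τ) := by
        funext s; rw [hrpow]
      rw [hfun] at h2
      refine h2.congr_deriv (Eq.symm ?_)
      rw [hrpow]
      have hne : Real.log γ ≠ 0 := ne_of_lt hlog
      have hone : -(1 / L) * Real.log γ = 1 := by
        rw [hLdef]; field_simp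
      calc Real.exp (Real.log γ * (x - τ))
          = (-(1 / L) * Real.log γ) * Real.exp (Real.log γ * (x - τ)) := by
            rw [hone, one_mul]
        _ = -(1 / L) * (Real.exp (Real.log γ * (x - τ)) * (Real.log γ * 1)) := by ring
    have htend : Tendsto (fun s => -(1 / L) * γ ^ (s - τ)) atTop (𝓝 0) := by
      have h1 : Tendsto (fun s : ℝ => Real.log γ * (s - τ)) atTop atBot := by
        apply Tendsto.const_mul_atTop_of_neg hlog
        exact tendsto_atTop_add_const_right atTop (-τ) tendsto_id
      have h2 : Tendsto (fun s : ℝ => γ ^ (s - τ)) atTop (𝓝 0) := by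
        have := Real.tendsto_exp_atBot.comp h1
        refine this.congr fun s => ?_
        simp [Function.comp, hrpow]
      simpa using h2.const_mul (-(1 / L))
    have key := integral_Ioi_of_hasDerivAt_of_tendsto' hderiv (hexp_int τ) htend
    rw [key]
    simp
  -- the set over which we integrate
  have hSmeas : MeasurableSet {q : ℝ × ℝ | 0 < q.2 ∧ q.2 ≤ q.1} :=
    (measurableSet_lt measurable_const measurable_snd).inter
      (measurableSet_le measurable_snd measurable_fst)
  set S : Set (ℝ × ℝ) := {q : ℝ × ℝ | 0 < q.2 ∧ q.2 ≤ q.1} with hSdef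
  set G : ℝ × ℝ → ℝ := S.indicator (fun q => b q.1 * b q.2 * γ ^ (q.1 - q.2)) with hGdef
  set K : ℝ × ℝ → ℝ := S.indicator (fun q => b q.2 ^ 2 * γ ^ (q.1 - q.2)) with hKdef
  have hcont_rpow : Continuous fun q : ℝ × ℝ => γ ^ (q.1 - q.2) := by
    have : (fun q : ℝ × ℝ => γ ^ (q.1 - q.2))
        = fun q => Real.exp (Real.log γ * (q.1 - q.2)) := by
      funext q; rw [hrpow]
    rw [this]
    exact Real.continuous_exp.comp (continuous_const.mul (continuous_fst.sub continuous_snd))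
  have hGmeas : Measurable G :=
    (((hb.comp continuous_fst).mul (hb.comp continuous_snd)).mul hcont_rpow).measurable.indicator
      hSmeas
  have hKmeas : Measurable K :=
    (((hb.comp continuous_snd).pow 2).mul hcont_rpow).measurable.indicator hSmeas
  have hKnonneg : ∀ p, 0 ≤ K p := by
    intro p
    by_cases hp : p ∈ S
    · rw [hKdef, Set.indicator_of_mem hp]
      exact mul_nonneg (sq_nonneg _) (Real.rpow_nonneg hγ0.le _)
    · rw [hKdef, Set.indicator_of_notMem hp]
  have hGnonneg : ∀ p, 0 ≤ G p := by
    intro p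
    by_cases hp : p ∈ S
    · rw [hGdef, Set.indicator_of_mem hp]
      have h2 : (0:ℝ) ≤ p.2 := hp.1.le
      have h1 : (0:ℝ) ≤ p.1 := h2.trans hp.2
      exact mul_nonneg (mul_nonneg (hnonneg _ h1) (hnonneg _ h2)) (Real.rpow_nonneg hγ0.le _)
    · rw [hGdef, Set.indicator_of_notMem hp]
  have hGK : ∀ p, G p ≤ K p := by
    intro p
    by_cases hp : p ∈ S
    · rw [hGdef, hKdef, Set.indicator_of_mem hp, Set.indicator_of_mem hp]
      have h2 : (0:ℝ) ≤ p.2 := hp.1.le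
      have h1 : (0:ℝ) ≤ p.1 := h2.trans hp.2
      have hb12 : b p.1 ≤ b p.2 := hmono h2 h1 hp.2
      refine mul_le_mul_of_nonneg_right ?_ (Real.rpow_nonneg hγ0.le _)
      rw [sq]
      exact mul_le_mul_of_nonneg_right hb12 (hnonneg _ h2)
    · rw [hGdef, hKdef, Set.indicator_of_notMem hp, Set.indicator_of_notMem hp]
  -- the sections of K
  have hKsec_eq : ∀ τ : ℝ, 0 < τ →
      (fun s => K (s, τ)) = (Ici τ).indicator (fun s => b τ ^ 2 * γ ^ (s - τ)) := by
    intro τ hτ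
    funext s
    by_cases hs : τ ≤ s
    · rw [Set.indicator_of_mem (show s ∈ Ici τ from hs), hKdef,
        Set.indicator_of_mem (show ((s, τ) : ℝ × ℝ) ∈ S from ⟨hτ, hs⟩)]
    · rw [Set.indicator_of_notMem (show s ∉ Ici τ from hs), hKdef,
        Set.indicator_of_notMem (show ((s, τ) : ℝ × ℝ) ∉ S from fun h => hs h.2)]
  have hKsec_zero : ∀ τ : ℝ, ¬(0 < τ) → (fun s => K (s, τ)) = fun _ => 0 := by
    intro τ hτ
    funext s
    rw [hKdef, Set.indicator_of_notMem (show ((s, τ) : ℝ × ℝ) ∉ S from fun h => hτ h.1)]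
  have hKsec_int : ∀ τ : ℝ, Integrable (fun s => K (s, τ)) := by
    intro τ
    by_cases hτ : 0 < τ
    · rw [hKsec_eq τ hτ, integrable_indicator_iff measurableSet_Ici]
      exact (integrableOn_Ici_iff_integrableOn_Ioi).2 ((hexp_int τ).const_mul _)
    · rw [hKsec_zero τ hτ]
      exact integrable_zero _ _ _
  have hKsec_val : ∀ τ : ℝ,
      (∫ s, K (s, τ)) = (Ioi (0:ℝ)).indicator (fun t => (1 / L) * b t ^ 2) τ := by
    intro τ
    by_cases hτ : 0 < τ
    · rw [hKsec_eq τ hτ, integral_indicator measurableSet_Ici,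
        Set.indicator_of_mem (show τ ∈ Ioi (0:ℝ) from hτ)]
      rw [integral_Ici_eq_integral_Ioi, integral_const_mul, hexp_val τ]
      ring
    · rw [hKsec_zero τ hτ, Set.indicator_of_notMem (show τ ∉ Ioi (0:ℝ) from hτ)]
      exact integral_zero _ _
  -- integrability of K on the product
  have hsqIoi : IntegrableOn (fun t => (1 / L) * b t ^ 2) (Ioi 0) :=
    (hsq.mono_set Ioi_subset_Ici_self).const_mul _
  have hKint : Integrable K (volume.prod volume) := by
    rw [integrable_prod_iff' hKmeas.aestronglyMeasurable]
    refine ⟨ae_of_all _ hKsec_int, ?_⟩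
    have hnorm : (fun τ => ∫ s, ‖K (s, τ)‖)
        = (Ioi (0:ℝ)).indicator (fun t => (1 / L) * b t ^ 2) := by
      funext τ
      rw [show (fun s => ‖K (s, τ)‖) = fun s => K (s, τ) from
        funext fun s => Real.norm_of_nonneg (hKnonneg _), hKsec_val τ]
    rw [hnorm]
    exact (integrable_indicator_iff measurableSet_Ioi).2 hsqIoi
  have hGint : Integrable G (volume.prod volume) :=
    hKint.mono hGmeas.aestronglyMeasurable (ae_of_all _ fun p => by
      rw [Real.norm_of_nonneg (hGnonneg p), Real.norm_of_nonneg (hKnonneg p)]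
      exact hGK p)
  -- identification of the inner integral
  have hI : EqOn (fun s => ∫ τ in (0:ℝ)..s, b s * b τ * γ ^ (s - τ))
      (fun s => ∫ τ, G (s, τ)) (Ici 0) := by
    intro s hs
    simp only
    rw [intervalIntegral.integral_of_le hs, ← integral_indicator measurableSet_Ioc]
    congr 1
  have hGint_left : Integrable (fun s => ∫ τ, G (s, τ)) volume := hGint.integral_prod_left
  have hInt1 : IntegrableOn (fun s => ∫ τ in (0:ℝ)..s, b s * b τ * γ ^ (s - τ)) (Ici 0) :=
    (hGint_left.integrableOn.congr_fun hI.symm measurableSet_Ici)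
  refine ⟨hInt1, ?_⟩
  have hzero : ∀ s, s ∉ Ici (0:ℝ) → (∫ τ, G (s, τ)) = 0 := by
    intro s hs
    have : (fun τ => G (s, τ)) = fun _ => 0 := by
      funext τ
      rw [hGdef, Set.indicator_of_notMem
        (show ((s, τ) : ℝ × ℝ) ∉ S from fun h => hs (le_trans h.1.le h.2))]
    rw [this]
    exact integral_zero _ _
  calc ∫ s in Ici (0:ℝ), ∫ τ in (0:ℝ)..s, b s * b τ * γ ^ (s - τ)
      = ∫ s in Ici (0:ℝ), ∫ τ, G (s, τ) := setIntegral_congr_fun measurableSet_Ici hI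
    _ = ∫ s, ∫ τ, G (s, τ) := setIntegral_eq_integral_of_forall_compl_eq_zero hzero
    _ = ∫ p, G p ∂(volume.prod volume) :=
        integral_integral (f := fun s τ => G (s, τ)) hGint
    _ ≤ ∫ p, K p ∂(volume.prod volume) := integral_mono hGint hKint hGK
    _ = ∫ τ, ∫ s, K (s, τ) := by
        rw [← integral_integral_swap (f := fun s τ => K (s, τ)) hKint]
        exact (integral_integral (f := fun s τ => K (s, τ)) hKint).symm
    _ = ∫ τ, (Ioi (0:ℝ)).indicator (fun t => (1 / L) * b t ^ 2) τ := by
        congr 1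
        funext τ
        exact hKsec_val τ
    _ = ∫ t in Ioi (0:ℝ), (1 / L) * b t ^ 2 := integral_indicator measurableSet_Ioi
    _ = (1 / L) * ∫ t in Ioi (0:ℝ), b t ^ 2 := integral_const_mul _ _
    _ = (1 / L) * ∫ s in Ici (0:ℝ), b s ^ 2 := by
        rw [integral_Ici_eq_integral_Ioi]
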